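/- In a non-Sasakian contact metric (κ,μ)-space, the eigendistributions D_{φh}(λ) and D_{φh}(−λ) of φh (λ = √(1−κ)) are mutually g-orthogonal Legendre distributions, each transversal to D_h(λ) and to D_h(−λ); e.g. TM = D_{φh}(λ) ⊕ D_h(−λ) ⊕ ℝξ. -/
import Mathlib

open Module
open scoped RealInnerProductSpace

noncomputable def eigenSub {E : Type*} [NormedAddCommGroup E] [InnerProductSpace ℝ E]
    (T : E →ₗ[ℝ] E) (c : ℝ) : Submodule ℝ E :=
  LinearMap.ker (T - c • LinearMap.id)

section Helpers

variable {E : Type*} [NormedAddCommGroup E] [InnerProductSpace ℝ E]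

lemma mem_eigenSub_iff (T : E →ₗ[ℝ] E) (c : ℝ) (x : E) :
    x ∈ eigenSub T c ↔ T x = c • x := by
  simp [eigenSub, LinearMap.mem_ker, sub_eq_zero]

lemma eigen_inner_xi_eq_zero (ξ : E) (S : E →ₗ[ℝ] E)
    (hSsym : ∀ x y, ⟪S x, y⟫ = ⟪x, S y⟫) (hSξ : S ξ = 0)
    {c : ℝ} (hc : c ≠ 0) {x : E} (hx : x ∈ eigenSub S c) : ⟪x, ξ⟫ = 0 := by
  rw [mem_eigenSub_iff] at hx
  have h1 : ⟪S x, ξ⟫ = 0 := by rw [hSsym, hSξ, inner_zero_right]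
  rw [hx, real_inner_smul_left] at h1
  exact (mul_eq_zero.1 h1).resolve_left hc

lemma eigen_orth (S : E →ₗ[ℝ] E) (hSsym : ∀ x y, ⟪S x, y⟫ = ⟪x, S y⟫)
    {a b : ℝ} (hab : a ≠ b) {x y : E} (hx : x ∈ eigenSub S a) (hy : y ∈ eigenSub S b) :
    ⟪x, y⟫ = 0 := by
  rw [mem_eigenSub_iff] at hx hy
  have h1 : a * ⟪x, y⟫ = b * ⟪x, y⟫ := by
    rw [← real_inner_smul_left, ← hx, hSsym, hy, real_inner_smul_right]
  have h2 : (a - b) * ⟪x, y⟫ = 0 := by ring_nf; linarith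
  exact (mul_eq_zero.1 h2).resolve_left (sub_ne_zero.2 hab)

lemma phi_maps_eigen (φ S : E →ₗ[ℝ] E) (hSφ : ∀ x, S (φ x) = -φ (S x))
    {c : ℝ} {x : E} (hx : x ∈ eigenSub S c) : φ x ∈ eigenSub S (-c) := by
  rw [mem_eigenSub_iff] at hx ⊢
  rw [hSφ, hx, map_smul, neg_smul]

lemma aux_finrank [FiniteDimensional ℝ E]
    (n : ℕ) (hdim : finrank ℝ E = 2 * n + 1)
    (ξ : E) (hξ : ξ ≠ 0) (φ : E →ₗ[ℝ] E)
    (hsq : ∀ x, φ (φ x) = -x + ⟪x, ξ⟫ • ξ)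
    (S : E →ₗ[ℝ] E) (lam : ℝ) (hlam : 0 < lam)
    (hSsym : ∀ x y, ⟪S x, y⟫ = ⟪x, S y⟫) (hSξ : S ξ = 0)
    (hS2 : ∀ x, S (S x) = lam ^ 2 • x - (lam ^ 2 * ⟪x, ξ⟫) • ξ)
    (hSφ : ∀ x, S (φ x) = -φ (S x)) :
    finrank ℝ (eigenSub S lam) = n ∧ finrank ℝ (eigenSub S (-lam)) = n := by
  have hlam0 : lam ≠ 0 := ne_of_gt hlam
  have φinj : ∀ c : ℝ, c ≠ 0 → ∀ x ∈ eigenSub S c, φ x = 0 → x = 0 := by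
    intro c hc x hx h0
    have h1 := hsq x
    rw [h0, map_zero, eigen_inner_xi_eq_zero ξ S hSsym hSξ hc hx] at h1
    simpa using h1.symm
  have hle : ∀ c : ℝ, c ≠ 0 → finrank ℝ (eigenSub S c) ≤ finrank ℝ (eigenSub S (-c)) := by
    intro c hc
    have hmap : ∀ x ∈ eigenSub S c, φ x ∈ eigenSub S (-c) := fun x hx =>
      phi_maps_eigen φ S hSφ hx
    have hinj : Function.Injective (φ.restrict hmap) := by
      intro x y hxy
      have h0 : φ (x - y : E) = 0 := by
        have := congrArg (Subtype.val) hxy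
        simp only [LinearMap.restrict_apply] at this
        rw [map_sub, this, sub_self]
      have hsub : ((x : E) - y) ∈ eigenSub S c := sub_mem x.2 y.2
      have := φinj c hc _ hsub h0
      exact Subtype.ext (by rwa [sub_eq_zero] at this)
    exact LinearMap.finrank_le_finrank_of_injective hinj
  have heq : finrank ℝ (eigenSub S lam) = finrank ℝ (eigenSub S (-lam)) := by
    refine le_antisymm (hle lam hlam0) ?_
    have := hle (-lam) (neg_ne_zero.2 hlam0)
    rwa [neg_neg] at this
  have hdisj : Disjoint (eigenSub S lam) (eigenSub S (-lam)) := by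
    rw [Submodule.disjoint_def]
    intro x h1 h2
    rw [mem_eigenSub_iff] at h1 h2
    have : (lam - -lam) • x = 0 := by rw [sub_smul, h1.symm, h2.symm, sub_self]
    have h3 : lam - -lam ≠ 0 := by simp; linarith
    exact (smul_eq_zero.1 this).resolve_left h3
  have hsup : eigenSub S lam ⊔ eigenSub S (-lam) = (Submodule.span ℝ {ξ})ᗮ := by
    apply le_antisymm
    · apply sup_le
      · intro x hx
        rw [Submodule.mem_orthogonal_singleton_iff_inner_right, real_inner_comm]
        exact eigen_inner_xi_eq_zero ξ S hSsym hSξ hlam0 hx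
      · intro x hx
        rw [Submodule.mem_orthogonal_singleton_iff_inner_right, real_inner_comm]
        exact eigen_inner_xi_eq_zero ξ S hSsym hSξ (neg_ne_zero.2 hlam0) hx
    · intro w hw
      have hwξ : ⟪w, ξ⟫ = 0 :=
        Submodule.mem_orthogonal_singleton_iff_inner_left.1 hw
      set x := (2 * lam)⁻¹ • (lam • w + S w) with hxdef
      set y := (2 * lam)⁻¹ • (lam • w - S w) with hydef
      have hS2w : S (S w) = lam ^ 2 • w := by rw [hS2 w, hwξ]; simp
      have hx : x ∈ eigenSub S lam := by
        rw [mem_eigenSub_iff, hxdef, map_smul, map_add, map_smul, hS2w]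
        module
      have hy : y ∈ eigenSub S (-lam) := by
        rw [mem_eigenSub_iff, hydef, map_smul, map_sub, map_smul, hS2w]
        module
      have hxy : x + y = w := by
        have h1 : x + y = ((2 * lam)⁻¹ * (2 * lam)) • w := by
          rw [hxdef, hydef]; module
        rw [h1, inv_mul_cancel₀ (by positivity), one_smul]
      rw [← hxy]
      exact Submodule.add_mem_sup hx hy
  have hrank1 : finrank ℝ (Submodule.span ℝ {ξ} : Submodule ℝ E) = 1 :=
    finrank_span_singleton hξ
  have horth := Submodule.finrank_add_finrank_orthogonal (Submodule.span ℝ {ξ} : Submodule ℝ E)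
  have hrankN : finrank ℝ ((Submodule.span ℝ {ξ})ᗮ : Submodule ℝ E) = 2 * n := by
    rw [hrank1, hdim] at horth; omega
  have hsum := Submodule.finrank_sup_add_finrank_inf_eq (eigenSub S lam) (eigenSub S (-lam))
  rw [hsup, hdisj.eq_bot, finrank_bot, hrankN] at hsum
  omega

end Helpers

/-- In a non-Sasakian contact metric `(κ,μ)`-space, the
eigendistributions `D_{φh}(λ)` and `D_{φh}(-λ)` of `φh` (`λ = √(1-κ)`) are mutually
`g`-orthogonal Legendre distributions (they lie in `ker η` and `dη = g(·, φ·)`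
vanishes on them, each being `n`-dimensional), each transversal to `D_h(λ)` and to
`D_h(-λ)`; e.g. `TM = D_{φh}(λ) ⊕ D_h(-λ) ⊕ ℝξ`.  (Pointwise linear-algebra
formulation, `η = ⟪·, ξ⟫`.) -/
theorem phi_h_eigendistributions_Legendre_transversal
    {E : Type*} [NormedAddCommGroup E] [InnerProductSpace ℝ E] [FiniteDimensional ℝ E]
    (n : ℕ) (hdim : finrank ℝ E = 2 * n + 1)
    (ξ : E) (φ h : E →ₗ[ℝ] E) (κ μ : ℝ)
    (hκ : κ < 1)
    (hηξ : ⟪ξ, ξ⟫ = 1)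
    (hφξ : φ ξ = 0) (hhξ : h ξ = 0)
    (hsq : ∀ x, φ (φ x) = -x + ⟪x, ξ⟫ • ξ)
    (hcompat : ∀ x y, ⟪φ x, φ y⟫ = ⟪x, y⟫ - ⟪x, ξ⟫ * ⟪y, ξ⟫)
    (hsym : ∀ x y, ⟪h x, y⟫ = ⟪x, h y⟫)
    (hanti : ∀ x, h (φ x) = -φ (h x))
    (hh2 : ∀ x, h (h x) = (κ - 1) • φ (φ x)) :
    (∀ x ∈ eigenSub (φ ∘ₗ h) (Real.sqrt (1 - κ)),
      ∀ y ∈ eigenSub (φ ∘ₗ h) (-Real.sqrt (1 - κ)), ⟪x, y⟫ = 0) ∧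
    (∀ x ∈ eigenSub (φ ∘ₗ h) (Real.sqrt (1 - κ)), ⟪x, ξ⟫ = 0) ∧
    (∀ x ∈ eigenSub (φ ∘ₗ h) (-Real.sqrt (1 - κ)), ⟪x, ξ⟫ = 0) ∧
    (∀ x ∈ eigenSub (φ ∘ₗ h) (Real.sqrt (1 - κ)),
      ∀ y ∈ eigenSub (φ ∘ₗ h) (Real.sqrt (1 - κ)), ⟪x, φ y⟫ = 0) ∧
    (∀ x ∈ eigenSub (φ ∘ₗ h) (-Real.sqrt (1 - κ)),
      ∀ y ∈ eigenSub (φ ∘ₗ h) (-Real.sqrt (1 - κ)), ⟪x, φ y⟫ = 0) ∧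
    finrank ℝ (eigenSub (φ ∘ₗ h) (Real.sqrt (1 - κ))) = n ∧
    finrank ℝ (eigenSub (φ ∘ₗ h) (-Real.sqrt (1 - κ))) = n ∧
    (∀ a b : ℝ,
      (a = Real.sqrt (1 - κ) ∨ a = -Real.sqrt (1 - κ)) →
      (b = Real.sqrt (1 - κ) ∨ b = -Real.sqrt (1 - κ)) →
      DirectSum.IsInternal
        ![eigenSub (φ ∘ₗ h) a, eigenSub h b, Submodule.span ℝ {ξ}]) := by
  set lam := Real.sqrt (1 - κ) with hlamdef
  have hlam : 0 < lam := Real.sqrt_pos.2 (by linarith)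
  have hlam0 : lam ≠ 0 := ne_of_gt hlam
  have hlam2 : lam ^ 2 = 1 - κ := Real.sq_sqrt (by linarith)
  have hξ0 : ξ ≠ 0 := by
    intro h0
    rw [h0, inner_zero_left] at hηξ
    exact one_ne_zero hηξ.symm
  -- η ∘ φ = 0
  have ηφ : ∀ x, ⟪φ x, ξ⟫ = 0 := by
    intro x
    have h1 := hsq (φ x)
    have h2 : φ (φ (φ x)) = -φ x := by
      rw [hsq x, map_add, map_neg, map_smul, hφξ, smul_zero, add_zero]
    rw [h2] at h1
    have h3 : ⟪φ x, ξ⟫ • ξ = 0 := (left_eq_add.mp h1).symm ▸ rfl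
    have h3' : ⟪φ x, ξ⟫ • ξ = 0 := left_eq_add.mp h1
    exact (smul_eq_zero.1 h3').resolve_right hξ0
  -- φ is skew-symmetric
  have skew : ∀ x y, ⟪φ x, y⟫ = -⟪x, φ y⟫ := by
    intro x y
    have hy : y = ⟪y, ξ⟫ • ξ - φ (φ y) := by rw [hsq y]; module
    calc ⟪φ x, y⟫ = ⟪φ x, ⟪y, ξ⟫ • ξ - φ (φ y)⟫ := by rw [← hy]
      _ = ⟪y, ξ⟫ * ⟪φ x, ξ⟫ - ⟪φ x, φ (φ y)⟫ := by
          rw [inner_sub_right, real_inner_smul_right]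
      _ = -(⟪x, φ y⟫ - ⟪x, ξ⟫ * ⟪φ y, ξ⟫) := by rw [ηφ x, hcompat, mul_zero, zero_sub]
      _ = -⟪x, φ y⟫ := by rw [ηφ y, mul_zero, sub_zero]
  have ηh : ∀ x, ⟪h x, ξ⟫ = 0 := by
    intro x; rw [hsym, hhξ, inner_zero_right]
  set T := φ ∘ₗ h with hTdef
  have hTapp : ∀ x, T x = φ (h x) := fun _ => rfl
  have hTsym : ∀ x y, ⟪T x, y⟫ = ⟪x, T y⟫ := by
    intro x y
    rw [hTapp, hTapp]
    calc ⟪φ (h x), y⟫ = -⟪h x, φ y⟫ := skew _ _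
      _ = -⟪x, h (φ y)⟫ := by rw [hsym]
      _ = ⟪x, φ (h y)⟫ := by rw [hanti, inner_neg_right, neg_neg]
  have hTξ : T ξ = 0 := by rw [hTapp, hhξ, map_zero]
  have hh2' : ∀ x, h (h x) = lam ^ 2 • x - (lam ^ 2 * ⟪x, ξ⟫) • ξ := by
    intro x
    rw [hh2, hsq, hlam2]
    module
  have hT2 : ∀ x, T (T x) = lam ^ 2 • x - (lam ^ 2 * ⟪x, ξ⟫) • ξ := by
    intro x
    have e1 : T (T x) = φ (h (φ (h x))) := rfl
    rw [e1, hanti (h x), map_neg, hsq (h (h x)), ηh (h x), hh2' x]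
    module
  have hTφ : ∀ x, T (φ x) = -φ (T x) := by
    intro x
    have e1 : T (φ x) = φ (h (φ x)) := rfl
    have e2 : φ (T x) = φ (φ (h x)) := rfl
    rw [e1, e2, hanti x, map_neg]
  obtain ⟨hTrp, hTrn⟩ :=
    aux_finrank n hdim ξ hξ0 φ hsq T lam hlam hTsym hTξ hT2 hTφ
  obtain ⟨hhrp, hhrn⟩ :=
    aux_finrank n hdim ξ hξ0 φ hsq h lam hlam hsym hhξ hh2' hanti
  have hlamne : lam ≠ -lam := by intro hc; linarith [hlam]
  refine ⟨?_, ?_, ?_, ?_, ?_, hTrp, hTrn, ?_⟩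
  · intro x hx y hy
    exact eigen_orth T hTsym hlamne hx hy
  · intro x hx
    exact eigen_inner_xi_eq_zero ξ T hTsym hTξ hlam0 hx
  · intro x hx
    exact eigen_inner_xi_eq_zero ξ T hTsym hTξ (neg_ne_zero.2 hlam0) hx
  · intro x hx y hy
    exact eigen_orth T hTsym hlamne hx (phi_maps_eigen φ T hTφ hy)
  · intro x hx y hy
    have := phi_maps_eigen φ T hTφ hy
    rw [neg_neg] at this
    exact eigen_orth T hTsym (Ne.symm hlamne) hx this
  · intro a b ha hb
    have ha0 : a ≠ 0 := by
      rcases ha with rfl | rfl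
      · exact hlam0
      · exact neg_ne_zero.2 hlam0
    have hb0 : b ≠ 0 := by
      rcases hb with rfl | rfl
      · exact hlam0
      · exact neg_ne_zero.2 hlam0
    have hrankA : finrank ℝ (eigenSub T a) = n := by
      rcases ha with rfl | rfl
      · exact hTrp
      · exact hTrn
    have hrankB : finrank ℝ (eigenSub h b) = n := by
      rcases hb with rfl | rfl
      · exact hhrp
      · exact hhrn
    set A := eigenSub T a with hAdef
    set B := eigenSub h b with hBdef
    set C := Submodule.span ℝ {ξ} with hCdef
    -- transversality of A and B
    have hdisjAB : ∀ x, x ∈ A → x ∈ B → x = 0 := by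
      intro x h1 h2
      rw [hAdef, mem_eigenSub_iff] at h1
      rw [hBdef, mem_eigenSub_iff] at h2
      have h3 : φ (h x) = a • x := h1
      rw [h2, map_smul] at h3
      have h4 : ⟪φ x, x⟫ = 0 := by
        have hs := skew x x
        have hc := real_inner_comm (φ x) x
        linarith
      have h5 : a * ⟪x, x⟫ = 0 := by
        have := congrArg (fun v => ⟪v, x⟫) h3
        simp only [real_inner_smul_left] at this
        rw [h4, mul_zero] at this
        linarith
      exact inner_self_eq_zero.1 ((mul_eq_zero.1 h5).resolve_left ha0)
    have hmemA : A ≤ (Submodule.span ℝ {ξ})ᗮ := by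
      intro x hx
      rw [Submodule.mem_orthogonal_singleton_iff_inner_right, real_inner_comm]
      exact eigen_inner_xi_eq_zero ξ T hTsym hTξ ha0 hx
    have hmemB : B ≤ (Submodule.span ℝ {ξ})ᗮ := by
      intro x hx
      rw [Submodule.mem_orthogonal_singleton_iff_inner_right, real_inner_comm]
      exact eigen_inner_xi_eq_zero ξ h hsym hhξ hb0 hx
    have hdisjAB' : Disjoint A B := by
      rw [Submodule.disjoint_def]; exact hdisjAB
    have hrankAB : finrank ℝ ↥(A ⊔ B) = 2 * n := by
      have hsum := Submodule.finrank_sup_add_finrank_inf_eq A B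
      rw [hdisjAB'.eq_bot, finrank_bot, hrankA, hrankB] at hsum
      omega
    have hdisjABC : Disjoint (A ⊔ B) C := by
      exact ((Submodule.orthogonal_disjoint (Submodule.span ℝ {ξ})).symm).mono_left
        (sup_le hmemA hmemB)
    have htop : A ⊔ B ⊔ C = ⊤ := by
      apply Submodule.eq_top_of_finrank_eq
      have hsum := Submodule.finrank_sup_add_finrank_inf_eq (A ⊔ B) C
      rw [hdisjABC.eq_bot, finrank_bot, hrankAB, hCdef, finrank_span_singleton hξ0] at hsum
      rw [hdim, hCdef]
      omega
    have hF0 : (![A, B, C] : Fin 3 → Submodule ℝ E) 0 = A := rfl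
    have hF1 : (![A, B, C] : Fin 3 → Submodule ℝ E) 1 = B := rfl
    have hF2 : (![A, B, C] : Fin 3 → Submodule ℝ E) 2 = C := rfl
    have hiSup : (⨆ i, (![A, B, C] : Fin 3 → Submodule ℝ E) i) = A ⊔ B ⊔ C := by
      apply le_antisymm
      · apply iSup_le
        intro i
        fin_cases i
        · exact le_sup_of_le_left le_sup_left
        · exact le_sup_of_le_left le_sup_right
        · exact le_sup_right
      · exact sup_le (sup_le (le_iSup (![A, B, C] : Fin 3 → Submodule ℝ E) 0)
          (le_iSup (![A, B, C] : Fin 3 → Submodule ℝ E) 1))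
          (le_iSup (![A, B, C] : Fin 3 → Submodule ℝ E) 2)
    -- elementwise decomposition helper for independence
    have hkey : ∀ (P Q : Submodule ℝ E), P ≤ (Submodule.span ℝ {ξ})ᗮ →
        Q ≤ (Submodule.span ℝ {ξ})ᗮ → (∀ x, x ∈ P → x ∈ Q → x = 0) →
        Disjoint P (Q ⊔ C) := by
      intro P Q hP hQ hPQ
      rw [Submodule.disjoint_def]
      intro x hxP hxQC
      obtain ⟨y, hy, z, hz, hyz⟩ := Submodule.mem_sup.1 hxQC
      obtain ⟨c, rfl⟩ := Submodule.mem_span_singleton.1 hz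
      have h1 : ⟪x, ξ⟫ = 0 := by
        have := hP hxP
        rw [Submodule.mem_orthogonal_singleton_iff_inner_left] at this
        exact this
      have h2 : ⟪y, ξ⟫ = 0 := by
        have := hQ hy
        rw [Submodule.mem_orthogonal_singleton_iff_inner_left] at this
        exact this
      have hc : c = 0 := by
        have := congrArg (fun v => ⟪v, ξ⟫) hyz
        simp only [inner_add_left, real_inner_smul_left] at this
        rw [h1, h2, hηξ] at this
        linarith
      rw [hc, zero_smul, add_zero] at hyz
      exact hPQ x hxP (hyz ▸ hy)
    have hindep : iSupIndep (![A, B, C] : Fin 3 → Submodule ℝ E) := by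
      rw [iSupIndep_def]
      intro i
      fin_cases i
      · -- index 0
        have hb : (⨆ j, ⨆ (_ : j ≠ (0 : Fin 3)), (![A, B, C] : Fin 3 → Submodule ℝ E) j)
            ≤ B ⊔ C := by
          apply iSup_le; intro j; apply iSup_le; intro hj
          fin_cases j
          · exact absurd rfl hj
          · exact le_sup_left
          · exact le_sup_right
        exact Disjoint.mono_right hb (hkey A B hmemA hmemB hdisjAB)
      · -- index 1
        have hb : (⨆ j, ⨆ (_ : j ≠ (1 : Fin 3)), (![A, B, C] : Fin 3 → Submodule ℝ E) j)
            ≤ A ⊔ C := by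
          apply iSup_le; intro j; apply iSup_le; intro hj
          fin_cases j
          · exact le_sup_left
          · exact absurd rfl hj
          · exact le_sup_right
        exact Disjoint.mono_right hb
          (hkey B A hmemB hmemA (fun x hxB hxA => hdisjAB x hxA hxB))
      · -- index 2
        have hb : (⨆ j, ⨆ (_ : j ≠ (2 : Fin 3)), (![A, B, C] : Fin 3 → Submodule ℝ E) j)
            ≤ A ⊔ B := by
          apply iSup_le; intro j; apply iSup_le; intro hj
          fin_cases j
          · exact le_sup_left
          · exact le_sup_right
          · exact absurd rfl hj
        refine Disjoint.mono_right hb ?_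
        exact (Submodule.orthogonal_disjoint (Submodule.span ℝ {ξ})).mono_right
          (sup_le hmemA hmemB)
    exact DirectSum.isInternal_submodule_of_iSupIndep_of_iSup_eq_top hindep
      (by rw [hiSup]; exact htop)
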